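/- Let 1 < γ < χ and c ≥ 1 be real numbers, and for i = 0, 1, 2, … set β_i = (4χ/(χ−γ)) ((χ/γ)^{i+1} − 1). Suppose (M_i)_{i ≥ 0} is a sequence of non-negative real numbers satisfying M_{i+1} ≤ c^{(χ/γ)/β_{i+1}} · β_{i+1}^{(4χ/γ)/β_{i+1}} · M_i^{(χ/γ)(β_i/β_{i+1})} for every i ≥ 0. Then there exists a constant C = C(χ, γ, c) > 0, independent of the sequence (M_i), such that M_i ≤ C · M_0^{(χ/γ)^i β_0 / β_i} for all i ≥ 1; in particular, since (χ/γ)^i β_0 / β_i → 1 − γ/χ as i → ∞, one has limsup_{i → ∞} M_i ≤ C · M_0^{1 − γ/χ}. -/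

import Mathlib

/-!
Write `θ = χ/γ > 1`. The recursion `M_{i+1} ≤ a_{i+1} M_i^{q_i}`, with `q_i = θ β_i/β_{i+1} ∈ [0, 1]`
and `a_i = c^{θ/β_i} β_i^{4θ/β_i} ≥ 1` (`moserFactor`), unrolls to `M_n ≤ (a_1 ⋯ a_n) M_0^{q_0 ⋯ q_{n-1}}`, and the exponent telescopes to
`θ^n β_0/β_n`. Since `β_i ≥ θ^i`, `log a_i = (θ log c + (4χ/γ) log β_i)/β_i = O(β_i^{-1/2})` is
summable, so the products `a_1 ⋯ a_n` are bounded by `C = exp (∑ log a_i)`.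
-/

open Filter

noncomputable section

noncomputable def Bseq (χ γ : ℝ) (i : ℕ) : ℝ :=
  (4 * χ / (χ - γ)) * ((χ / γ) ^ (i + 1) - 1)

open Finset Real

theorem le_prod_mul_rpow_prod_of_le_mul_rpow {M a q : ℕ → ℝ} (hM : ∀ i, 0 ≤ M i)
    (ha : ∀ i, 1 ≤ a i) (hq₀ : ∀ i, 0 ≤ q i) (hq₁ : ∀ i, q i ≤ 1)
    (h : ∀ i, M (i + 1) ≤ a i * M i ^ q i) (n : ℕ) :
    M n ≤ (∏ i ∈ range n, a i) * M 0 ^ ∏ i ∈ range n, q i := by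
  induction n with
  | zero => simp
  | succ n ih =>
    set P := ∏ i ∈ range n, a i
    set E := ∏ i ∈ range n, q i
    have ha₀ : 0 ≤ a n := by linarith [ha n]
    have hP : 1 ≤ P := one_le_prod fun i _ => ha i
    calc M (n + 1) ≤ a n * M n ^ q n := h n
      _ ≤ a n * (P * M 0 ^ E) ^ q n :=
        mul_le_mul_of_nonneg_left (rpow_le_rpow (hM n) ih (hq₀ n)) ha₀
      _ = a n * P ^ q n * M 0 ^ (E * q n) := by
        rw [mul_rpow (by linarith) (rpow_nonneg (hM 0) _), ← rpow_mul (hM 0), mul_assoc]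
      _ ≤ a n * P * M 0 ^ (E * q n) := by
        gcongr
        · exact rpow_nonneg (hM 0) _
        · exact rpow_le_self_of_one_le hP (hq₁ n)
      _ = (∏ i ∈ range (n + 1), a i) * M 0 ^ ∏ i ∈ range (n + 1), q i := by
        rw [prod_range_succ, prod_range_succ, mul_comm (a n)]

theorem prod_range_le_exp_tsum_log {a : ℕ → ℝ} (ha : ∀ i, 1 ≤ a i)
    (hs : Summable fun i => log (a i)) (n : ℕ) :
    ∏ i ∈ range n, a i ≤ exp (∑' i, log (a i)) := by
  calc ∏ i ∈ range n, a i = exp (∑ i ∈ range n, log (a i)) := by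
        rw [exp_sum]
        exact prod_congr rfl fun i _ => (exp_log (by linarith [ha i])).symm
    _ ≤ exp (∑' i, log (a i)) :=
        exp_le_exp.mpr (hs.sum_le_tsum _ fun i _ => log_nonneg (ha i))

theorem log_div_self_le_two_div_sqrt {x : ℝ} (hx : 0 < x) : log x / x ≤ 2 / √x := by
  have hsx : 0 < √x := sqrt_pos.mpr hx
  have hlog : log x ≤ 2 * √x := by
    linarith [log_le_sub_one_of_pos hsx, log_sqrt hx.le]
  rw [div_le_div_iff₀ hx hsx]
  nlinarith [mul_self_sqrt hx.le]

theorem summable_inv_sqrt_of_pow_le {b : ℕ → ℝ} {θ : ℝ} (hθ : 1 < θ) (hb : ∀ i, θ ^ i ≤ b i) :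
    Summable fun i => (√(b i))⁻¹ := by
  have hs : 1 < √θ := by simpa using sqrt_lt_sqrt zero_le_one hθ
  refine (summable_geometric_of_lt_one (by positivity) (inv_lt_one_of_one_lt₀ hs)).of_nonneg_of_le
    (fun i => by positivity) fun i => ?_
  have hsqrt : √θ ^ i ≤ √(b i) := by
    rw [le_sqrt (by positivity) (by linarith [hb i, one_le_pow₀ (n := i) hθ.le]), ← pow_mul,
      mul_comm, pow_mul, sq_sqrt (by linarith)]
    exact hb i
  rw [inv_pow]
  exact inv_anti₀ (by positivity) hsqrt

theorem tendsto_pow_mul_sub_one_div_pow_succ_sub_one {θ : ℝ} (hθ : 1 < θ) :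
    Tendsto (fun n : ℕ => θ ^ n * (θ - 1) / (θ ^ (n + 1) - 1)) atTop (nhds (1 - θ⁻¹)) := by
  have hθ₀ : θ ≠ 0 := by positivity
  have hclosed (n : ℕ) :
      θ ^ n * (θ - 1) / (θ ^ (n + 1) - 1) = (1 - θ⁻¹) / (1 - θ⁻¹ ^ (n + 1)) := by
    have hpow : 1 < θ ^ (n + 1) := one_lt_pow₀ hθ n.succ_ne_zero
    have : θ⁻¹ ^ (n + 1) < 1 := by rw [inv_pow]; exact inv_lt_one_of_one_lt₀ hpow
    rw [div_eq_div_iff (by linarith) (by linarith), inv_pow]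
    field_simp
    ring
  have hpow := tendsto_pow_atTop_nhds_zero_of_lt_one (inv_nonneg.mpr (zero_le_one.trans hθ.le))
    (inv_lt_one_of_one_lt₀ hθ)
  have := (tendsto_const_nhds (x := 1 - θ⁻¹)).div (tendsto_const_nhds.sub
    ((tendsto_add_atTop_iff_nat 1).mpr hpow)) (by simp : (1 : ℝ) - 0 ≠ 0)
  rw [sub_zero, div_one] at this
  exact this.congr fun n => (hclosed n).symm

section Bseq

variable {χ γ : ℝ}

theorem Bseq_succ (i : ℕ) : Bseq χ γ (i + 1) = χ / γ * Bseq χ γ i + Bseq χ γ 0 := by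
  simp only [Bseq]
  ring

theorem prod_range_mul_Bseq_div (hB : ∀ i, Bseq χ γ i ≠ 0) (n : ℕ) :
    ∏ i ∈ range n, χ / γ * (Bseq χ γ i / Bseq χ γ (i + 1)) =
      (χ / γ) ^ n * Bseq χ γ 0 / Bseq χ γ n := by
  induction n with
  | zero => simp [hB 0]
  | succ n ih =>
    rw [prod_range_succ, ih, pow_succ]
    field_simp [hB n, hB (n + 1)]

variable (hγ : 0 < γ) (hχ : γ < χ)
include hγ hχ

theorem Bseq_zero : Bseq χ γ 0 = 4 * (χ / γ) := by
  rw [Bseq, zero_add, pow_one, div_sub_one hγ.ne', div_mul_div_cancel₀ (by linarith),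
    mul_div_assoc]

theorem pow_le_Bseq (i : ℕ) : (χ / γ) ^ i ≤ Bseq χ γ i := by
  have hθ : 1 < χ / γ := (one_lt_div hγ).mpr hχ
  have hB₀ : Bseq χ γ 0 = 4 * (χ / γ) := Bseq_zero hγ hχ
  induction i with
  | zero => linarith
  | succ i ih =>
    rw [Bseq_succ, pow_succ']
    linarith [mul_le_mul_of_nonneg_left ih (zero_le_one.trans hθ.le)]

theorem one_le_Bseq (i : ℕ) : 1 ≤ Bseq χ γ i :=
  (one_le_pow₀ ((one_lt_div hγ).mpr hχ).le).trans (pow_le_Bseq hγ hχ i)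

theorem Bseq_pos (i : ℕ) : 0 < Bseq χ γ i :=
  zero_lt_one.trans_le (one_le_Bseq hγ hχ i)

theorem mul_Bseq_div_Bseq_succ_le_one (i : ℕ) :
    χ / γ * (Bseq χ γ i / Bseq χ γ (i + 1)) ≤ 1 := by
  rw [← mul_div_assoc, div_le_one (Bseq_pos hγ hχ _), Bseq_succ]
  linarith [Bseq_pos hγ hχ 0]

theorem tendsto_pow_mul_Bseq_zero_div_Bseq :
    Tendsto (fun n : ℕ => (χ / γ) ^ n * Bseq χ γ 0 / Bseq χ γ n) atTop (nhds (1 - γ / χ)) := by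
  have hK : 4 * χ / (χ - γ) ≠ 0 := (div_pos (by linarith) (by linarith)).ne'
  rw [← inv_div χ γ]
  refine (tendsto_pow_mul_sub_one_div_pow_succ_sub_one ((one_lt_div hγ).mpr hχ)).congr fun n => ?_
  simp only [Bseq, zero_add, pow_one]
  rw [mul_left_comm, mul_div_mul_left _ _ hK]

end Bseq

noncomputable def moserFactor (χ γ c : ℝ) (i : ℕ) : ℝ :=
  c ^ ((χ / γ) / Bseq χ γ i) * Bseq χ γ i ^ ((4 * χ / γ) / Bseq χ γ i)

section moserFactor

variable {χ γ c : ℝ} (hγ : 0 < γ) (hχ : γ < χ) (hc : 1 ≤ c)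
include hγ hχ hc

theorem one_le_moserFactor (i : ℕ) : 1 ≤ moserFactor χ γ c i := by
  have hχ₀ : 0 < χ := hγ.trans hχ
  have hB₀ := Bseq_pos hγ hχ i
  exact one_le_mul_of_one_le_of_one_le (one_le_rpow hc (by positivity))
    (one_le_rpow (one_le_Bseq hγ hχ i) (by positivity))

theorem log_moserFactor_le (i : ℕ) :
    log (moserFactor χ γ c i) ≤ (χ / γ * log c + 8 * χ / γ) * (√(Bseq χ γ i))⁻¹ := by
  set B := Bseq χ γ i
  have hB : 1 ≤ B := one_le_Bseq hγ hχ i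
  have hB₀ : 0 < B := zero_lt_one.trans_le hB
  have hχ₀ : 0 < χ := hγ.trans hχ
  have hinv : B⁻¹ ≤ (√B)⁻¹ := inv_anti₀ (sqrt_pos.mpr hB₀) (sqrt_le_self_iff.mpr (Or.inr hB))
  have hlog : log B / B ≤ 2 * (√B)⁻¹ := by
    simpa only [div_eq_mul_inv] using log_div_self_le_two_div_sqrt hB₀
  calc log (moserFactor χ γ c i)
      = χ / γ * log c * B⁻¹ + 4 * χ / γ * (log B / B) := by
        rw [moserFactor, log_mul (by positivity) (by positivity), log_rpow (by linarith),
          log_rpow hB₀]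
        ring
    _ ≤ χ / γ * log c * (√B)⁻¹ + 4 * χ / γ * (2 * (√B)⁻¹) := by
        have := log_nonneg hc
        gcongr
    _ = (χ / γ * log c + 8 * χ / γ) * (√B)⁻¹ := by ring

theorem summable_log_moserFactor : Summable fun i => log (moserFactor χ γ c i) :=
  ((summable_inv_sqrt_of_pow_le ((one_lt_div hγ).mpr hχ) (pow_le_Bseq hγ hχ)).mul_left _)
    |>.of_nonneg_of_le (fun i => log_nonneg (one_le_moserFactor hγ hχ hc i))
      (log_moserFactor_le hγ hχ hc)

end moserFactor

/-- the elementary iteration behind the Moser iteration: if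
`M_{i+1} ≤ c^{(χ/γ)/β_{i+1}} β_{i+1}^{(4χ/γ)/β_{i+1}} M_i^{(χ/γ)(β_i/β_{i+1})}`, then
`M_i ≤ C M_0^{(χ/γ)^i β_0/β_i}` for all `i ≥ 1` with `C = C(χ,γ,c)`, and since
`(χ/γ)^i β_0/β_i → 1 − γ/χ`, also `limsup M_i ≤ C M_0^{1−γ/χ}`. -/
theorem stmt_15 (χ γ c : ℝ) (hγ : 1 < γ) (hχ : γ < χ) (hc : 1 ≤ c) :
    ∃ C : ℝ, 0 < C ∧
      (∀ M : ℕ → ℝ, (∀ i, 0 ≤ M i) →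
        (∀ i : ℕ, M (i + 1)
          ≤ c ^ ((χ / γ) / Bseq χ γ (i + 1))
            * Bseq χ γ (i + 1) ^ ((4 * χ / γ) / Bseq χ γ (i + 1))
            * M i ^ ((χ / γ) * (Bseq χ γ i / Bseq χ γ (i + 1)))) →
        (∀ i : ℕ, 1 ≤ i → M i ≤ C * M 0 ^ ((χ / γ) ^ i * Bseq χ γ 0 / Bseq χ γ i)) ∧
        Filter.limsup M Filter.atTop ≤ C * M 0 ^ (1 - γ / χ)) ∧
      Filter.Tendsto (fun i : ℕ => (χ / γ) ^ i * Bseq χ γ 0 / Bseq χ γ i)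
        Filter.atTop (nhds (1 - γ / χ)) := by
  have hγ₀ : 0 < γ := by linarith
  have hexp := tendsto_pow_mul_Bseq_zero_div_Bseq hγ₀ hχ
  set C := exp (∑' i, log (moserFactor χ γ c (i + 1)))
  refine ⟨C, exp_pos _, fun M hM hrec => ?_, hexp⟩
  have hbound (n : ℕ) : M n ≤ C * M 0 ^ ((χ / γ) ^ n * Bseq χ γ 0 / Bseq χ γ n) := by
    have hunrolled := le_prod_mul_rpow_prod_of_le_mul_rpow hM
      (fun i => one_le_moserFactor hγ₀ hχ hc (i + 1))
      (fun i => mul_nonneg (div_pos (by linarith) hγ₀).le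
        (div_pos (Bseq_pos hγ₀ hχ i) (Bseq_pos hγ₀ hχ (i + 1))).le)
      (mul_Bseq_div_Bseq_succ_le_one hγ₀ hχ) hrec n
    rw [prod_range_mul_Bseq_div fun i => (Bseq_pos hγ₀ hχ i).ne'] at hunrolled
    refine hunrolled.trans (mul_le_mul_of_nonneg_right ?_ (rpow_nonneg (hM 0) _))
    exact prod_range_le_exp_tsum_log (fun i => one_le_moserFactor hγ₀ hχ hc (i + 1))
      ((summable_nat_add_iff 1).mpr (summable_log_moserFactor hγ₀ hχ hc)) n
  refine ⟨fun i _ => hbound i, ?_⟩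
  have hlim : Tendsto (fun n => C * M 0 ^ ((χ / γ) ^ n * Bseq χ γ 0 / Bseq χ γ n)) atTop
      (nhds (C * M 0 ^ (1 - γ / χ))) :=
    (tendsto_const_nhds.rpow hexp (Or.inr (by rw [sub_pos, div_lt_one (by linarith)]; exact hχ)))
      |>.const_mul C
  exact (limsup_le_limsup (Eventually.of_forall hbound) (isCoboundedUnder_le_of_le atTop hM)
    hlim.isBoundedUnder_le).trans_eq hlim.limsup_eq
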